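/- Let D be a connected finite graph, B a proper subdiagram of D with connected components B_1,...,B_m, and D/B the quotient graph with vertex set V(D)\V(B), where distinct vertices α, β of D/B are joined if they are joined in D or there is some i with both α and β adjacent (in D) to some vertex of B_i. For a connected subdiagram A of D/B, let Ã be the subdiagram of D with vertex set V(A) together with the V(B_i) for those i with B_i not orthogonal to A. Then the maps C ↦ C̄ (vertex set V(C)\V(B)) and A ↦ Ã are mutually inverse bijections between the set of connected subdiagrams of D which are either orthogonal to each B_i or strictly contain each B_i they meet (precisely: compatible with every B_i and not contained in B), and the set of connected subdiagrams of D/B; moreover, this bijection preserves compatibility when restricted to subdiagrams of D compatible with all B_i. -/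

import Mathlib

/-!
Every vertex of `B` lies in exactly one component `Bᵢ`, and distinct components are orthogonal.
If `C` is connected, compatible with every `Bᵢ` and not inside `B`, then `C` contains each `Bᵢ`
it meets and leaves it along an edge ending in `C \ B`; so `C` is recovered from `C \ B` by
adjoining the components it touches. A path in `C` becomes a path of `D/B` by short-cutting each
excursion into a component, and conversely an edge of `D/B` through `Bᵢ` lifts to a path through
`Bᵢ`. For compatibility, an edge of `D` between two lifts is either an edge of `D/B` or lies at a
component touched by both quotients, which are then adjacent in `D/B`; and two orthogonal
connected sets of `D/B` sharing a vertex both consist of that vertex alone.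
-/

open scoped Classical

section NestedSets

variable {V : Type*} [Fintype V] [DecidableEq V]

/-- The (induced subgraph on the) finite vertex set `B` is connected (in particular nonempty). -/
def Conn (G : SimpleGraph V) (B : Finset V) : Prop :=
  (G.induce (B : Set V)).Connected

/-- Two vertex sets are orthogonal: no edge of `G` joins a vertex of one to a vertex
of the other. -/
def Orth (G : SimpleGraph V) (B C : Finset V) : Prop :=
  ∀ a ∈ B, ∀ b ∈ C, ¬ G.Adj a b

/-- Two subdiagrams are compatible if one contains the other or they are orthogonal. -/
def Compat (G : SimpleGraph V) (B C : Finset V) : Prop :=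
  B ⊆ C ∨ C ⊆ B ∨ Orth G B C

/-- A nested set on the (connected) diagram `D` with vertex set `V`: a collection of
pairwise compatible connected subdiagrams containing `D` itself. -/
def Nested (G : SimpleGraph V) (H : Finset (Finset V)) : Prop :=
  Finset.univ ∈ H ∧ (∀ B ∈ H, Conn G B) ∧ ∀ B ∈ H, ∀ C ∈ H, Compat G B C

/-- `iN H B` is the union of the elements of `H` strictly contained in `B`;
this coincides with the union of the *maximal* elements of `H` strictly contained in `B`. -/
noncomputable def iN (H : Finset (Finset V)) (B : Finset V) : Finset V :=
  (H.filter fun C => C ⊂ B).sup id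

/-- `nN H B = n(B;H)` is the number of vertices of `B` not covered by the maximal
elements of `H` strictly contained in `B`. -/
noncomputable def nN (H : Finset (Finset V)) (B : Finset V) : ℕ :=
  (B \ iN H B).card

/-- `C` is a connected component of (the induced subgraph on) `S`. -/
def IsCC (G : SimpleGraph V) (S C : Finset V) : Prop :=
  C ⊆ S ∧ Conn G C ∧ ∀ C', C ⊆ C' → C' ⊆ S → Conn G C' → C' = C

/-- A maximal nested set on `D`. -/
def MaxNested (G : SimpleGraph V) (F : Finset (Finset V)) : Prop :=
  Nested G F ∧ ∀ K, Nested G K → F ⊆ K → K = F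

end NestedSets

section Quotient

variable {V : Type*} [Fintype V] [DecidableEq V]

/-- The quotient diagram `D/B`: vertices are the vertices of `D` outside `B`, and two
distinct such vertices are joined iff they are joined in `D` or both are adjacent (in `D`)
to a common connected component of `B` (the components being given by `comps`). -/
def quotGraph (Gr : SimpleGraph V) (B : Finset V) (comps : Finset (Finset V)) :
    SimpleGraph V where
  Adj a b := a ≠ b ∧ a ∉ B ∧ b ∉ B ∧
    (Gr.Adj a b ∨ ∃ Bi ∈ comps, (∃ u ∈ Bi, Gr.Adj a u) ∧ ∃ w ∈ Bi, Gr.Adj b w)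
  symm := by
    constructor
    rintro a b ⟨h1, h2, h3, h4⟩
    refine ⟨h1.symm, h3, h2, ?_⟩
    rcases h4 with h | ⟨Bi, hBi, hu, hw⟩
    · exact Or.inl h.symm
    · exact Or.inr ⟨Bi, hBi, hw, hu⟩
  loopless := by constructor; rintro a ⟨h1, -⟩; exact h1 rfl

/-- Lifting a connected subdiagram `A` of `D/B` to `D`: adjoin the connected components
of `B` which are not orthogonal to `A`. -/
noncomputable def liftQ (Gr : SimpleGraph V) (comps : Finset (Finset V)) (A : Finset V) :
    Finset V :=
  A ∪ (comps.filter fun Bi => ¬ Orth Gr Bi A).sup id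

end Quotient

open Relation

section ReachIn

variable {V : Type*} {G : SimpleGraph V}

def ReachIn (G : SimpleGraph V) (S : Finset V) : V → V → Prop :=
  ReflTransGen fun a b => a ∈ S ∧ b ∈ S ∧ G.Adj a b

lemma ReachIn.mono {S T : Finset V} (hST : S ⊆ T) {u v : V} (h : ReachIn G S u v) :
    ReachIn G T u v :=
  ReflTransGen.mono (fun _ _ hab => ⟨hST hab.1, hST hab.2.1, hab.2.2⟩) _ _ h

lemma ReachIn.symm {S : Finset V} {u v : V} (h : ReachIn G S u v) : ReachIn G S v u :=
  ReflTransGen.mono (fun _ _ hab => ⟨hab.2.1, hab.1, hab.2.2.symm⟩) _ _ (ReflTransGen.swap _ _ h)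

lemma ReachIn.exists_adj_of_mem_of_notMem {S : Finset V} {X : Set V} {u v : V}
    (h : ReachIn G S u v) (hu : u ∈ X) (hv : v ∉ X) :
    ∃ a ∈ S, ∃ b ∈ S, G.Adj a b ∧ a ∈ X ∧ b ∉ X := by
  induction h with
  | refl => exact absurd hu hv
  | @tail b c _ hbc ih =>
    by_cases hb : b ∈ X
    · exact ⟨b, hbc.1, c, hbc.2.1, hbc.2.2, hb, hv⟩
    · exact ih hb

end ReachIn

section Connectivity

variable {V : Type*} {G : SimpleGraph V}

lemma conn_iff_reachIn {S : Finset V} :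
    Conn G S ↔ S.Nonempty ∧ ∀ u ∈ S, ∀ v ∈ S, ReachIn G S u v := by
  constructor
  · intro h
    obtain ⟨⟨w, hw⟩⟩ := h.nonempty
    refine ⟨⟨w, hw⟩, fun u hu v hv => ?_⟩
    have := (SimpleGraph.reachable_iff_reflTransGen _ _).mp (h.preconnected ⟨u, hu⟩ ⟨v, hv⟩)
    exact this.lift Subtype.val fun a b hab => ⟨a.2, b.2, hab⟩
  · rintro ⟨⟨w, hw⟩, hS⟩
    refine (SimpleGraph.connected_iff _).mpr ⟨fun ⟨u, hu⟩ ⟨v, hv⟩ => ?_, ⟨⟨w, hw⟩⟩⟩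
    suffices ∀ v, ReachIn G S u v → ∀ hv : v ∈ S,
        (G.induce (S : Set V)).Reachable ⟨u, hu⟩ ⟨v, hv⟩ from this v (hS u hu v hv) hv
    intro v h
    induction h with
    | refl => exact fun _ => .rfl
    | tail _ hbc ih => exact fun _ => (ih hbc.1).trans (SimpleGraph.Adj.reachable hbc.2.2)

lemma Conn.nonempty {S : Finset V} (h : Conn G S) : S.Nonempty :=
  (conn_iff_reachIn.mp h).1

lemma Conn.reachIn {S : Finset V} (h : Conn G S) {u v : V} (hu : u ∈ S) (hv : v ∈ S) :
    ReachIn G S u v :=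
  (conn_iff_reachIn.mp h).2 u hu v hv

lemma conn_singleton (v : V) : Conn G {v} := by
  rw [Conn, Finset.coe_singleton, SimpleGraph.induce_singleton_eq_top]
  exact SimpleGraph.connected_top

lemma Conn.union_of_mem [DecidableEq V] {X Y : Finset V} (hX : Conn G X) (hY : Conn G Y)
    {v : V} (hvX : v ∈ X) (hvY : v ∈ Y) : Conn G (X ∪ Y) := by
  rw [Conn, Finset.coe_union]
  exact G.induce_union_connected hX.preconnected hY.preconnected ⟨v, hvX, hvY⟩

lemma Conn.union_of_adj [DecidableEq V] {X Y : Finset V} (hX : Conn G X) (hY : Conn G Y)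
    {x y : V} (hx : x ∈ X) (hy : y ∈ Y) (hxy : G.Adj x y) : Conn G (X ∪ Y) := by
  rw [Conn, Finset.coe_union]
  exact G.connected_induce_union hX.preconnected hY.preconnected hx hy hxy

lemma Conn.exists_adj_of_mem_of_notMem {C : Finset V} {X : Set V} (hC : Conn G C) {u v : V}
    (hu : u ∈ C) (huX : u ∈ X) (hv : v ∈ C) (hvX : v ∉ X) :
    ∃ a ∈ C, ∃ b ∈ C, G.Adj a b ∧ a ∈ X ∧ b ∉ X :=
  (hC.reachIn hu hv).exists_adj_of_mem_of_notMem huX hvX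

lemma Conn.exists_adj_of_ne {C : Finset V} (hC : Conn G C) {u v : V} (hu : u ∈ C) (hv : v ∈ C)
    (hne : v ≠ u) : ∃ w ∈ C, G.Adj u w := by
  obtain ⟨a, -, b, hb, hab, rfl, -⟩ :=
    hC.exists_adj_of_mem_of_notMem (X := {u}) hu rfl hv hne
  exact ⟨b, hb, hab⟩

lemma not_orth_iff {X Y : Finset V} : ¬ Orth G X Y ↔ ∃ a ∈ X, ∃ b ∈ Y, G.Adj a b := by
  simp [Orth]

lemma Orth.symm {X Y : Finset V} (h : Orth G X Y) : Orth G Y X :=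
  fun a ha b hb hab => h b hb a ha hab.symm

lemma Orth.eq_singleton_of_mem {X Y : Finset V} (h : Orth G X Y) (hX : Conn G X) {v : V}
    (hvX : v ∈ X) (hvY : v ∈ Y) : X = {v} := by
  refine Finset.eq_singleton_iff_unique_mem.mpr ⟨hvX, fun w hw => ?_⟩
  by_contra hwv
  obtain ⟨y, hy, hvy⟩ := hX.exists_adj_of_ne hvX hw hwv
  exact h y hy v hvY hvy.symm

end Connectivity

section Components

variable {V : Type*} {G : SimpleGraph V} {S C : Finset V}

lemma IsCC.mem_of_adj (hC : IsCC G S C) {a b : V} (ha : a ∈ C) (hb : b ∈ S) (hab : G.Adj a b) :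
    b ∈ C := by
  obtain ⟨hCS, hCconn, hmax⟩ := hC
  have := hmax (C ∪ {b}) Finset.subset_union_left
    (Finset.union_subset hCS (Finset.singleton_subset_iff.mpr hb))
    (hCconn.union_of_adj (conn_singleton b) ha (Finset.mem_singleton_self b) hab)
  exact this ▸ Finset.mem_union_right _ (Finset.mem_singleton_self b)

lemma IsCC.eq_of_mem {C' : Finset V} (hC : IsCC G S C) (hC' : IsCC G S C') {v : V}
    (hv : v ∈ C) (hv' : v ∈ C') : C = C' := by
  have hconn : Conn G (C ∪ C') := hC.2.1.union_of_mem hC'.2.1 hv hv'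
  have hsub : C ∪ C' ⊆ S := Finset.union_subset hC.1 hC'.1
  exact (hC.2.2 _ Finset.subset_union_left hsub hconn).symm.trans
    (hC'.2.2 _ Finset.subset_union_right hsub hconn)

lemma IsCC.orth_of_ne {C' : Finset V} (hC : IsCC G S C) (hC' : IsCC G S C') (hne : C ≠ C') :
    Orth G C C' :=
  fun _ ha _ hb hab => hne (hC.eq_of_mem hC' (hC.mem_of_adj ha (hC'.1 hb) hab) hb)

lemma exists_isCC_mem {v : V} (hv : v ∈ S) : ∃ C, IsCC G S C ∧ v ∈ C := by
  have hne : (S.powerset.filter fun C => Conn G C ∧ v ∈ C).Nonempty :=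
    ⟨{v}, by simp [hv, conn_singleton]⟩
  obtain ⟨C, hC, hmax⟩ := Finset.exists_max_image _ Finset.card hne
  simp only [Finset.mem_filter, Finset.mem_powerset] at hC hmax
  refine ⟨C, ⟨hC.1, hC.2.1, fun C' hCC' hC'S hC' => ?_⟩, hC.2.2⟩
  exact (Finset.eq_of_subset_of_card_le hCC' (hmax C' ⟨hC'S, hC', hCC' hC.2.2⟩)).symm

lemma subset_of_compat_of_mem {Bi : Finset V} (hBiS : Bi ⊆ S) (hC : Conn G C) (hCS : ¬ C ⊆ S)
    (hcompat : Compat G C Bi) {x : V} (hxBi : x ∈ Bi) (hxC : x ∈ C) : Bi ⊆ C := by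
  obtain ⟨v, hvC, hvS⟩ := Finset.not_subset.mp hCS
  obtain ⟨y, hyC, hxy⟩ := hC.exists_adj_of_ne hxC hvC fun h => hvS (h ▸ hBiS hxBi)
  rcases hcompat with h | h | h
  · exact absurd (hBiS (h hvC)) hvS
  · exact h
  · exact absurd hxy.symm (h y hyC x hxBi)

lemma subset_of_compat_of_not_orth_sdiff [DecidableEq V] {Bi : Finset V} (hBiS : Bi ⊆ S)
    (hcompat : Compat G C Bi) (hO : ¬ Orth G Bi (C \ S)) : Bi ⊆ C := by
  obtain ⟨b, hb, z, hz, hbz⟩ := not_orth_iff.mp hO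
  obtain ⟨hzC, hzS⟩ := Finset.mem_sdiff.mp hz
  rcases hcompat with h | h | h
  · exact absurd (hBiS (h hzC)) hzS
  · exact h
  · exact absurd hbz.symm (h z hzC b hb)

lemma IsCC.exists_adj_sdiff [DecidableEq V] {K : Finset V} (hK : IsCC G S K) (hKC : K ⊆ C)
    (hC : Conn G C) (hCS : ¬ C ⊆ S) : ∃ z ∈ C \ S, ∃ b ∈ K, G.Adj z b := by
  obtain ⟨v, hvC, hvS⟩ := Finset.not_subset.mp hCS
  obtain ⟨u, hu⟩ := hK.2.1.nonempty
  obtain ⟨a, -, b, hbC, hab, haK, hbK⟩ :=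
    hC.exists_adj_of_mem_of_notMem (X := K) (hKC hu) hu hvC fun h => hvS (hK.1 h)
  have hbS : b ∉ S := fun h => hbK (hK.mem_of_adj haK h hab)
  exact ⟨b, Finset.mem_sdiff.mpr ⟨hbC, hbS⟩, a, haK, hab.symm⟩

end Components

section Quotient

variable {V : Type*} {G : SimpleGraph V} {B : Finset V} {comps : Finset (Finset V)}

def IsComponents (G : SimpleGraph V) (B : Finset V) (comps : Finset (Finset V)) : Prop :=
  ∀ C, C ∈ comps ↔ IsCC G B C

lemma IsComponents.isCC (h : IsComponents G B comps) {Bi : Finset V} (hBi : Bi ∈ comps) :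
    IsCC G B Bi :=
  (h Bi).mp hBi

lemma IsComponents.exists_mem (h : IsComponents G B comps) {v : V} (hv : v ∈ B) :
    ∃ Bi ∈ comps, v ∈ Bi := by
  obtain ⟨C, hC, hvC⟩ := exists_isCC_mem hv
  exact ⟨C, (h C).mpr hC, hvC⟩

variable [DecidableEq V]

lemma mem_liftQ {A : Finset V} {x : V} :
    x ∈ liftQ G comps A ↔ x ∈ A ∨ ∃ Bi ∈ comps, ¬ Orth G Bi A ∧ x ∈ Bi := by
  simp [liftQ, and_assoc]

lemma subset_liftQ (A : Finset V) : A ⊆ liftQ G comps A :=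
  Finset.subset_union_left

lemma liftQ_mono {A A' : Finset V} (h : A ⊆ A') : liftQ G comps A ⊆ liftQ G comps A' := by
  intro x hx
  rcases mem_liftQ.mp hx with hxA | ⟨Bi, hBi, hO, hxBi⟩
  · exact mem_liftQ.mpr (Or.inl (h hxA))
  · exact mem_liftQ.mpr (Or.inr ⟨Bi, hBi, fun hO' => hO fun a ha b hb => hO' a ha b (h hb), hxBi⟩)

lemma liftQ_sdiff_of_disjoint (hcomps : IsComponents G B comps) {A : Finset V}
    (hAB : Disjoint A B) : liftQ G comps A \ B = A := by
  ext x
  rw [Finset.mem_sdiff, mem_liftQ]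
  constructor
  · rintro ⟨hxA | ⟨Bi, hBi, -, hxBi⟩, hxB⟩
    · exact hxA
    · exact absurd ((hcomps.isCC hBi).1 hxBi) hxB
  · exact fun hxA => ⟨Or.inl hxA, Finset.disjoint_left.mp hAB hxA⟩

lemma compat_liftQ (hcomps : IsComponents G B comps) (A : Finset V) {Bi : Finset V}
    (hBi : Bi ∈ comps) : Compat G (liftQ G comps A) Bi := by
  by_cases hO : Orth G Bi A
  · refine Or.inr (Or.inr fun x hx y hy hxy => ?_)
    rcases mem_liftQ.mp hx with hxA | ⟨Bj, hBj, hOj, hxBj⟩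
    · exact hO y hy x hxA hxy.symm
    · have hne : Bj ≠ Bi := fun h => hOj (h ▸ hO)
      exact (hcomps.isCC hBj).orth_of_ne (hcomps.isCC hBi) hne x hxBj y hy hxy
  · exact Or.inr (Or.inl fun x hx => mem_liftQ.mpr (Or.inr ⟨Bi, hBi, hO, hx⟩))

lemma conn_liftQ (hcomps : IsComponents G B comps) {A : Finset V}
    (hA : Conn (quotGraph G B comps) A) : Conn G (liftQ G comps A) := by
  set T := liftQ G comps A
  have hAT : A ⊆ T := subset_liftQ A
  have hBiT : ∀ Bi ∈ comps, ¬ Orth G Bi A → Bi ⊆ T :=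
    fun Bi hBi hO x hx => mem_liftQ.mpr (Or.inr ⟨Bi, hBi, hO, hx⟩)
  have hedge : ∀ a b, (a ∈ A ∧ b ∈ A ∧ (quotGraph G B comps).Adj a b) → ReachIn G T a b := by
    rintro a b ⟨ha, hb, -, -, -, hab | ⟨Bi, hBi, ⟨u, hu, hau⟩, ⟨w, hw, hbw⟩⟩⟩
    · exact ReflTransGen.single ⟨hAT ha, hAT hb, hab⟩
    · have hBiT' := hBiT Bi hBi fun hO => hO u hu a ha hau.symm
      have huw : ReachIn G T u w := (((hcomps.isCC hBi).2.1).reachIn hu hw).mono hBiT'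
      exact ReflTransGen.head ⟨hAT ha, hBiT' hu, hau⟩
        (ReflTransGen.tail huw ⟨hBiT' hw, hAT hb, hbw.symm⟩)
  have hreachA : ∀ a ∈ A, ∀ b ∈ A, ReachIn G T a b :=
    fun a ha b hb => ReflTransGen.lift' id hedge _ _ (hA.reachIn ha hb)
  have htoA : ∀ u ∈ T, ∃ a ∈ A, ReachIn G T u a := by
    intro u hu
    rcases mem_liftQ.mp hu with huA | ⟨Bi, hBi, hO, huBi⟩
    · exact ⟨u, huA, ReflTransGen.refl⟩
    · have hBiT' := hBiT Bi hBi hO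
      obtain ⟨p, hp, q, hq, hpq⟩ := not_orth_iff.mp hO
      have hup : ReachIn G T u p := (((hcomps.isCC hBi).2.1).reachIn huBi hp).mono hBiT'
      exact ⟨q, hq, ReflTransGen.tail hup ⟨hBiT' hp, hAT hq, hpq⟩⟩
  obtain ⟨a₀, ha₀⟩ := hA.nonempty
  refine conn_iff_reachIn.mpr ⟨⟨a₀, hAT ha₀⟩, fun u hu v hv => ?_⟩
  obtain ⟨a, ha, hua⟩ := htoA u hu
  obtain ⟨b, hb, hvb⟩ := htoA v hv
  exact (ReflTransGen.trans hua (hreachA a ha b hb)).trans hvb.symm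

lemma liftQ_sdiff_cancel (hcomps : IsComponents G B comps) {C : Finset V} (hC : Conn G C)
    (hcompat : ∀ Bi ∈ comps, Compat G C Bi) (hCB : ¬ C ⊆ B) : liftQ G comps (C \ B) = C := by
  refine Finset.Subset.antisymm (fun x hx => ?_) (fun x hxC => ?_)
  · rcases mem_liftQ.mp hx with hxC | ⟨Bi, hBi, hO, hxBi⟩
    · exact (Finset.mem_sdiff.mp hxC).1
    · exact subset_of_compat_of_not_orth_sdiff (hcomps.isCC hBi).1 (hcompat Bi hBi) hO hxBi
  · by_cases hxB : x ∈ B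
    · obtain ⟨Bi, hBi, hxBi⟩ := hcomps.exists_mem hxB
      have hBiC := subset_of_compat_of_mem (hcomps.isCC hBi).1 hC hCB (hcompat Bi hBi) hxBi hxC
      obtain ⟨z, hz, b, hb, hzb⟩ := (hcomps.isCC hBi).exists_adj_sdiff hBiC hC hCB
      exact mem_liftQ.mpr (Or.inr ⟨Bi, hBi, not_orth_iff.mpr ⟨b, hb, z, hz, hzb.symm⟩, hxBi⟩)
    · exact subset_liftQ _ (Finset.mem_sdiff.mpr ⟨hxC, hxB⟩)

lemma conn_quotGraph_sdiff (hcomps : IsComponents G B comps) {C : Finset V} (hC : Conn G C)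
    (hCB : ¬ C ⊆ B) : Conn (quotGraph G B comps) (C \ B) := by
  obtain ⟨w, hw⟩ := Finset.not_subset.mp hCB
  refine conn_iff_reachIn.mpr ⟨⟨w, Finset.mem_sdiff.mpr hw⟩, fun u hu v hv => ?_⟩
  -- every vertex `c` reached from `u` inside `C` is anchored: some `z ∈ C \ B` reached from `u`
  -- in `D/B` is `c` itself or is adjacent to the component of `B` containing `c`
  have hanchor : ∀ c, ReachIn G C u c → ∃ z ∈ C \ B, ReachIn (quotGraph G B comps) (C \ B) u z ∧
      (z = c ∨ ∃ Bi ∈ comps, c ∈ Bi ∧ ∃ b ∈ Bi, G.Adj z b) := by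
    intro c hc
    induction hc with
    | refl => exact ⟨u, hu, ReflTransGen.refl, Or.inl rfl⟩
    | @tail c d _ hcd ih =>
      obtain ⟨hcC, hdC, hadj⟩ := hcd
      obtain ⟨z, hz, hreach, hzc⟩ := ih
      obtain ⟨hzC, hzB⟩ := Finset.mem_sdiff.mp hz
      by_cases hdB : d ∈ B
      · refine ⟨z, hz, hreach, Or.inr ?_⟩
        rcases hzc with rfl | ⟨Bi, hBi, hcBi, hb⟩
        · obtain ⟨Bi, hBi, hdBi⟩ := hcomps.exists_mem hdB
          exact ⟨Bi, hBi, hdBi, d, hdBi, hadj⟩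
        · exact ⟨Bi, hBi, (hcomps.isCC hBi).mem_of_adj hcBi hdB hadj, hb⟩
      · refine ⟨d, Finset.mem_sdiff.mpr ⟨hdC, hdB⟩, ?_, Or.inl rfl⟩
        by_cases hzd : z = d
        · exact hzd ▸ hreach
        refine ReflTransGen.tail hreach ⟨hz, Finset.mem_sdiff.mpr ⟨hdC, hdB⟩, hzd, hzB, hdB, ?_⟩
        rcases hzc with rfl | ⟨Bi, hBi, hcBi, hb⟩
        · exact Or.inl hadj
        · exact Or.inr ⟨Bi, hBi, hb, c, hcBi, hadj.symm⟩
  obtain ⟨hvC, hvB⟩ := Finset.mem_sdiff.mp hv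
  obtain ⟨z, -, hreach, rfl | ⟨Bi, hBi, hvBi, -⟩⟩ :=
    hanchor v (hC.reachIn (Finset.mem_sdiff.mp hu).1 hvC)
  · exact hreach
  · exact absurd ((hcomps.isCC hBi).1 hvBi) hvB

end Quotient

section Compatibility

variable {V : Type*} [DecidableEq V] {G : SimpleGraph V} {B : Finset V}
  {comps : Finset (Finset V)}

lemma compat_quotGraph_sdiff (hcomps : IsComponents G B comps) {C₁ C₂ : Finset V}
    (hcompat₂ : ∀ Bi ∈ comps, Compat G C₂ Bi) (h : Compat G C₁ C₂) :
    Compat (quotGraph G B comps) (C₁ \ B) (C₂ \ B) := by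
  rcases h with h | h | h
  · exact Or.inl (Finset.sdiff_subset_sdiff h subset_rfl)
  · exact Or.inr (Or.inl (Finset.sdiff_subset_sdiff h subset_rfl))
  · refine Or.inr (Or.inr fun a ha b hb hab => ?_)
    obtain ⟨-, -, -, hab | ⟨Bi, hBi, ⟨u, hu, hau⟩, ⟨w, hw, hbw⟩⟩⟩ := hab
    · exact h a (Finset.mem_sdiff.mp ha).1 b (Finset.mem_sdiff.mp hb).1 hab
    · have hBiC₂ : Bi ⊆ C₂ := subset_of_compat_of_not_orth_sdiff (hcomps.isCC hBi).1
        (hcompat₂ Bi hBi) (not_orth_iff.mpr ⟨w, hw, b, hb, hbw.symm⟩)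
      exact h a (Finset.mem_sdiff.mp ha).1 u (hBiC₂ hu) hau

lemma exists_quotGraph_adj_of_adj_mem_liftQ {A : Finset V} (hAB : Disjoint A B) {x y : V}
    (hxB : x ∉ B) (hxA : x ∉ A) (hy : y ∈ liftQ G comps A) (hxy : G.Adj x y) :
    ∃ z ∈ A, (quotGraph G B comps).Adj x z := by
  rcases mem_liftQ.mp hy with hyA | ⟨Bi, hBi, hO, hyBi⟩
  · exact ⟨y, hyA, fun h => hxA (h ▸ hyA), hxB, Finset.disjoint_left.mp hAB hyA, Or.inl hxy⟩
  · obtain ⟨b, hb, z, hz, hbz⟩ := not_orth_iff.mp hO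
    exact ⟨z, hz, fun h => hxA (h ▸ hz), hxB, Finset.disjoint_left.mp hAB hz,
      Or.inr ⟨Bi, hBi, ⟨y, hyBi, hxy⟩, ⟨b, hb, hbz.symm⟩⟩⟩

lemma orth_liftQ (hcomps : IsComponents G B comps) {A₁ A₂ : Finset V} (h₁ : Disjoint A₁ B)
    (h₂ : Disjoint A₂ B) (h₁₂ : Disjoint A₁ A₂) (hO : Orth (quotGraph G B comps) A₁ A₂) :
    Orth G (liftQ G comps A₁) (liftQ G comps A₂) := by
  intro x hx y hy hxy
  rcases mem_liftQ.mp hx with hxA | ⟨Bi, hBi, hOi, hxBi⟩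
  · obtain ⟨z, hz, hxz⟩ := exists_quotGraph_adj_of_adj_mem_liftQ h₂
      (Finset.disjoint_left.mp h₁ hxA) (Finset.disjoint_left.mp h₁₂ hxA) hy hxy
    exact hO x hxA z hz hxz
  rcases mem_liftQ.mp hy with hyA | ⟨Bj, hBj, hOj, hyBj⟩
  · obtain ⟨z, hz, hyz⟩ := exists_quotGraph_adj_of_adj_mem_liftQ h₁
      (Finset.disjoint_left.mp h₂ hyA) (Finset.disjoint_right.mp h₁₂ hyA) hx hxy.symm
    exact hO z hz y hyA hyz.symm
  have hyBi := (hcomps.isCC hBi).mem_of_adj hxBi ((hcomps.isCC hBj).1 hyBj) hxy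
  obtain rfl := (hcomps.isCC hBi).eq_of_mem (hcomps.isCC hBj) hyBi hyBj
  obtain ⟨b₁, hb₁, z₁, hz₁, hbz₁⟩ := not_orth_iff.mp hOi
  obtain ⟨b₂, hb₂, z₂, hz₂, hbz₂⟩ := not_orth_iff.mp hOj
  exact hO z₁ hz₁ z₂ hz₂ ⟨fun h => Finset.disjoint_left.mp h₁₂ hz₁ (h ▸ hz₂),
    Finset.disjoint_left.mp h₁ hz₁, Finset.disjoint_left.mp h₂ hz₂,
    Or.inr ⟨Bi, hBi, ⟨b₁, hb₁, hbz₁.symm⟩, ⟨b₂, hb₂, hbz₂.symm⟩⟩⟩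

lemma compat_of_compat_quotGraph_sdiff (hcomps : IsComponents G B comps) {C₁ C₂ : Finset V}
    (hC₁ : Conn G C₁) (hcompat₁ : ∀ Bi ∈ comps, Compat G C₁ Bi) (hC₁B : ¬ C₁ ⊆ B)
    (hC₂ : Conn G C₂) (hcompat₂ : ∀ Bi ∈ comps, Compat G C₂ Bi) (hC₂B : ¬ C₂ ⊆ B)
    (h : Compat (quotGraph G B comps) (C₁ \ B) (C₂ \ B)) : Compat G C₁ C₂ := by
  rw [← liftQ_sdiff_cancel hcomps hC₁ hcompat₁ hC₁B, ← liftQ_sdiff_cancel hcomps hC₂ hcompat₂ hC₂B]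
  rcases h with h | h | h
  · exact Or.inl (liftQ_mono h)
  · exact Or.inr (Or.inl (liftQ_mono h))
  by_cases hdisj : Disjoint (C₁ \ B) (C₂ \ B)
  · exact Or.inr (Or.inr
      (orth_liftQ hcomps Finset.sdiff_disjoint Finset.sdiff_disjoint hdisj h))
  obtain ⟨v, hv₁, hv₂⟩ := Finset.not_disjoint_iff.mp hdisj
  have e₁ := h.eq_singleton_of_mem (conn_quotGraph_sdiff hcomps hC₁ hC₁B) hv₁ hv₂
  have e₂ := h.symm.eq_singleton_of_mem (conn_quotGraph_sdiff hcomps hC₂ hC₂B) hv₂ hv₁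
  exact Or.inl (congrArg (liftQ G comps) (e₁.trans e₂.symm)).subset

end Compatibility

theorem stmt4_general {V : Type*} [DecidableEq V]
    (Gr : SimpleGraph V) (B : Finset V)
    (comps : Finset (Finset V)) (hcomps : ∀ C : Finset V, C ∈ comps ↔ IsCC Gr B C) :
    (∀ A : Finset V, Conn (quotGraph Gr B comps) A → Disjoint A B →
      (Conn Gr (liftQ Gr comps A) ∧
       (∀ Bi ∈ comps, Compat Gr (liftQ Gr comps A) Bi) ∧
       ¬ liftQ Gr comps A ⊆ B) ∧
      liftQ Gr comps A \ B = A) ∧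
    (∀ C : Finset V, Conn Gr C → (∀ Bi ∈ comps, Compat Gr C Bi) → ¬ C ⊆ B →
      (Conn (quotGraph Gr B comps) (C \ B) ∧ Disjoint (C \ B) B) ∧
      liftQ Gr comps (C \ B) = C) ∧
    (∀ C₁ C₂ : Finset V,
      (Conn Gr C₁ ∧ (∀ Bi ∈ comps, Compat Gr C₁ Bi) ∧ ¬ C₁ ⊆ B) →
      (Conn Gr C₂ ∧ (∀ Bi ∈ comps, Compat Gr C₂ Bi) ∧ ¬ C₂ ⊆ B) →
      (Compat Gr C₁ C₂ ↔ Compat (quotGraph Gr B comps) (C₁ \ B) (C₂ \ B))) := by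
  refine ⟨fun A hA hAB => ⟨⟨conn_liftQ hcomps hA, fun Bi hBi => compat_liftQ hcomps A hBi, ?_⟩,
      liftQ_sdiff_of_disjoint hcomps hAB⟩,
    fun C hC hcompat hCB => ⟨⟨conn_quotGraph_sdiff hcomps hC hCB, Finset.sdiff_disjoint⟩,
      liftQ_sdiff_cancel hcomps hC hcompat hCB⟩, ?_⟩
  · obtain ⟨a, ha⟩ := hA.nonempty
    exact fun hsub => Finset.disjoint_left.mp hAB ha (hsub (subset_liftQ A ha))
  · rintro C₁ C₂ ⟨hC₁, hcompat₁, hC₁B⟩ ⟨hC₂, hcompat₂, hC₂B⟩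
    exact ⟨compat_quotGraph_sdiff hcomps hcompat₂,
      compat_of_compat_quotGraph_sdiff hcomps hC₁ hcompat₁ hC₁B hC₂ hcompat₂ hC₂B⟩

/-- The maps `C ↦ C \ B` and `A ↦ Ã` are mutually inverse bijections
between the connected subdiagrams of `D` compatible with every connected component of `B`
and not contained in `B`, and the connected subdiagrams of `D/B`; moreover this bijection
preserves compatibility. -/
theorem stmt4 {V : Type*} [Fintype V] [DecidableEq V]
    (Gr : SimpleGraph V) (hGr : Gr.Connected)
    (B : Finset V) (hBne : B.Nonempty) (hBproper : B ≠ Finset.univ)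
    (comps : Finset (Finset V)) (hcomps : ∀ C : Finset V, C ∈ comps ↔ IsCC Gr B C) :
    (∀ A : Finset V, Conn (quotGraph Gr B comps) A → Disjoint A B →
      (Conn Gr (liftQ Gr comps A) ∧
       (∀ Bi ∈ comps, Compat Gr (liftQ Gr comps A) Bi) ∧
       ¬ liftQ Gr comps A ⊆ B) ∧
      liftQ Gr comps A \ B = A) ∧
    (∀ C : Finset V, Conn Gr C → (∀ Bi ∈ comps, Compat Gr C Bi) → ¬ C ⊆ B →
      (Conn (quotGraph Gr B comps) (C \ B) ∧ Disjoint (C \ B) B) ∧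
      liftQ Gr comps (C \ B) = C) ∧
    (∀ C₁ C₂ : Finset V,
      (Conn Gr C₁ ∧ (∀ Bi ∈ comps, Compat Gr C₁ Bi) ∧ ¬ C₁ ⊆ B) →
      (Conn Gr C₂ ∧ (∀ Bi ∈ comps, Compat Gr C₂ Bi) ∧ ¬ C₂ ⊆ B) →
      (Compat Gr C₁ C₂ ↔ Compat (quotGraph Gr B comps) (C₁ \ B) (C₂ \ B))) :=
  stmt4_general Gr B comps hcomps
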